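/- arXiv:2602.05371 — 2 statements merged into one kernel-verified Lean document; each statement's English description precedes it below -/
import Mathlib

section
/- Let {(xⱼ, yⱼ)}_{j=1}^N be a finite dataset, x̃ⱼ = (xⱼ, 1) ∈ ℝ^{d+1}, and V(θ) = (1/2) Σⱼ (yⱼ − max(x̃ⱼᵀθ₁, x̃ⱼᵀθ₂))² for θ = (θ₁, θ₂). Suppose θ satisfies the nondegenerate hinge condition x̃ⱼᵀθ₁ ≠ x̃ⱼᵀθ₂ for all j, and let (S₁, S₂) be the partition induced by θ, with design matrices X₁, X₂ and response vectors y₁, y₂ such that X₁ᵀX₁ and X₂ᵀX₂ are positive definite. Let p = θ_OLS − θ be the Newton direction, where θ_OLS is the pair of OLS solutions on S₁ and S₂, and assume θ ≠ θ_OLS. Then there exists μ̃ > 0 such that V(θ + μp) < V(θ) for all μ ∈ (0, μ̃]. -/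
open Matrix Finset

noncomputable section

/-- Augmented feature vector `x̃ = (x, 1) ∈ ℝ^{d+1}`. -/
def aug {d : ℕ} (x : Fin d → ℝ) : Fin (d + 1) → ℝ := Fin.snoc x 1

/-- The hinge least-squares objective
`V(θ) = (1/2) Σⱼ (yⱼ − max(x̃ⱼᵀθ₁, x̃ⱼᵀθ₂))²`. -/
def hingeV {d N : ℕ} (x : Fin N → Fin d → ℝ) (y : Fin N → ℝ)
    (θ : (Fin (d + 1) → ℝ) × (Fin (d + 1) → ℝ)) : ℝ :=
  (1 / 2) * ∑ j, (y j - max (aug (x j) ⬝ᵥ θ.1) (aug (x j) ⬝ᵥ θ.2)) ^ 2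

/-- The partition set `S₁(θ) = {j : x̃ⱼᵀθ₁ ≥ x̃ⱼᵀθ₂}`. -/
def part1 {d N : ℕ} (x : Fin N → Fin d → ℝ)
    (θ : (Fin (d + 1) → ℝ) × (Fin (d + 1) → ℝ)) : Finset (Fin N) :=
  Finset.univ.filter fun j => aug (x j) ⬝ᵥ θ.1 ≥ aug (x j) ⬝ᵥ θ.2

/-- Design matrix whose rows are the augmented feature vectors `x̃ⱼᵀ` for `j ∈ S`. -/
def design {d N : ℕ} (x : Fin N → Fin d → ℝ) (S : Finset (Fin N)) :
    Matrix {j // j ∈ S} (Fin (d + 1)) ℝ :=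
  Matrix.of fun j => aug (x j.1)

/-- Response vector with entries `yⱼ` for `j ∈ S`. -/
def resp {N : ℕ} (y : Fin N → ℝ) (S : Finset (Fin N)) : {j // j ∈ S} → ℝ :=
  fun j => y j.1

/-- The OLS solution `(X_SᵀX_S)⁻¹ X_Sᵀ y_S` on the index set `S`. -/
def ols {d N : ℕ} (x : Fin N → Fin d → ℝ) (y : Fin N → ℝ) (S : Finset (Fin N)) :
    Fin (d + 1) → ℝ :=
  ((design x S)ᵀ * design x S)⁻¹.mulVec ((design x S)ᵀ.mulVec (resp y S))

lemma normal_sum {d N : ℕ} (x : Fin N → Fin d → ℝ) (y : Fin N → ℝ) (S : Finset (Fin N))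
    (hpd : ((design x S)ᵀ * design x S).PosDef) (v : Fin (d + 1) → ℝ) :
    ∑ j ∈ S, (y j - aug (x j) ⬝ᵥ ols x y S) * (aug (x j) ⬝ᵥ v) = 0 := by
  have hdet : IsUnit ((design x S)ᵀ * design x S).det :=
    isUnit_iff_ne_zero.mpr hpd.det_pos.ne'
  rw [← Finset.sum_coe_sort S]
  have hshow : ∑ j : {j // j ∈ S}, (y j.1 - aug (x j.1) ⬝ᵥ ols x y S) * (aug (x j.1) ⬝ᵥ v)
      = (resp y S - (design x S).mulVec (ols x y S)) ⬝ᵥ ((design x S).mulVec v) := rfl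
  rw [hshow, dotProduct_mulVec, ← Matrix.mulVec_transpose]
  have h0 : (design x S)ᵀ.mulVec (resp y S - (design x S).mulVec (ols x y S)) = 0 := by
    rw [Matrix.mulVec_sub, Matrix.mulVec_mulVec, ols, Matrix.mulVec_mulVec,
      Matrix.mul_nonsing_inv _ hdet, Matrix.one_mulVec, sub_self]
  rw [h0, zero_dotProduct]

lemma quad_pos {d N : ℕ} (x : Fin N → Fin d → ℝ) (S : Finset (Fin N))
    (hpd : ((design x S)ᵀ * design x S).PosDef) (v : Fin (d + 1) → ℝ) (hv : v ≠ 0) :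
    0 < ∑ j ∈ S, (aug (x j) ⬝ᵥ v) ^ 2 := by
  have h := hpd.dotProduct_mulVec_pos hv
  rw [star_trivial] at h
  rw [← Finset.sum_coe_sort S]
  have hshow : ∑ j : {j // j ∈ S}, (aug (x j.1) ⬝ᵥ v) ^ 2
      = ((design x S).mulVec v) ⬝ᵥ ((design x S).mulVec v) := by
    simp [dotProduct, sq]; rfl
  rw [hshow]
  calc (0:ℝ) < v ⬝ᵥ ((design x S)ᵀ * design x S) *ᵥ v := h
    _ = ((design x S).mulVec v) ⬝ᵥ ((design x S).mulVec v) := by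
        rw [← Matrix.mulVec_mulVec, dotProduct_mulVec, Matrix.vecMul_transpose]

lemma design_nonempty {d N : ℕ} (x : Fin N → Fin d → ℝ) (S : Finset (Fin N))
    (hpd : ((design x S)ᵀ * design x S).PosDef) : S.Nonempty := by
  by_contra h
  rw [Finset.not_nonempty_iff_eq_empty] at h
  have h0 : 0 < ∑ j ∈ S, (aug (x j) ⬝ᵥ (fun _ => (1:ℝ))) ^ 2 :=
    quad_pos x S hpd _ (by
      intro hcon
      have := congrFun hcon 0
      simp at this)
  rw [h, Finset.sum_empty] at h0
  exact lt_irrefl _ h0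

/-- At a nondegenerate point `θ` with positive-definite partition Gram
matrices and Newton direction `p = θ_OLS − θ ≠ 0`, there exists `μ̃ > 0` such that
`V(θ + μp) < V(θ)` for all `μ ∈ (0, μ̃]`. -/
theorem stmt_4 {d N : ℕ} (x : Fin N → Fin d → ℝ) (y : Fin N → ℝ)
    (θ : (Fin (d + 1) → ℝ) × (Fin (d + 1) → ℝ))
    (hnd : ∀ j, aug (x j) ⬝ᵥ θ.1 ≠ aug (x j) ⬝ᵥ θ.2)
    (hpd1 : ((design x (part1 x θ))ᵀ * design x (part1 x θ)).PosDef)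
    (hpd2 : ((design x (part1 x θ)ᶜ)ᵀ * design x (part1 x θ)ᶜ).PosDef)
    (θOLS : (Fin (d + 1) → ℝ) × (Fin (d + 1) → ℝ))
    (hOLS : θOLS = (ols x y (part1 x θ), ols x y (part1 x θ)ᶜ))
    (hne : θ ≠ θOLS) :
    ∃ μtil > (0 : ℝ), ∀ μ ∈ Set.Ioc (0 : ℝ) μtil,
      hingeV x y (θ + μ • (θOLS - θ)) < hingeV x y θ := by
  classical
  set S := part1 x θ with hS
  set p := θOLS - θ with hp
  -- membership characterization
  have hmem : ∀ j, j ∈ S ↔ aug (x j) ⬝ᵥ θ.2 ≤ aug (x j) ⬝ᵥ θ.1 := by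
    intro j; simp [hS, part1, ge_iff_le]
  -- per-index branch preservation
  have hbr : ∀ j : Fin N, ∃ ε > (0:ℝ), ∀ μ ∈ Set.Icc (0:ℝ) ε,
      (j ∈ S → aug (x j) ⬝ᵥ (θ.2 + μ • p.2) ≤ aug (x j) ⬝ᵥ (θ.1 + μ • p.1)) ∧
      (j ∉ S → aug (x j) ⬝ᵥ (θ.1 + μ • p.1) ≤ aug (x j) ⬝ᵥ (θ.2 + μ • p.2)) := by
    intro j
    obtain ⟨c, hc⟩ : ∃ c, c = aug (x j) ⬝ᵥ θ.1 - aug (x j) ⬝ᵥ θ.2 := ⟨_, rfl⟩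
    obtain ⟨e, he⟩ : ∃ e, e = aug (x j) ⬝ᵥ p.1 - aug (x j) ⬝ᵥ p.2 := ⟨_, rfl⟩
    have hcne : c ≠ 0 := by rw [hc]; exact sub_ne_zero.mpr (hnd j)
    refine ⟨|c| / (2 * (|e| + 1)), by positivity, ?_⟩
    intro μ hμ
    have hexp : ∀ i : Fin 2, True := fun _ => trivial
    have hdiff : aug (x j) ⬝ᵥ (θ.1 + μ • p.1) - aug (x j) ⬝ᵥ (θ.2 + μ • p.2)
        = c + μ * e := by
      rw [hc, he]; simp [dotProduct_add, dotProduct_smul, smul_eq_mul]; ring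
    have he1 : |e| ≤ |e| := le_refl _
    have hkey : |μ * e| ≤ |c| / 2 := by
      rw [abs_mul, abs_of_nonneg hμ.1]
      calc μ * |e| ≤ (|c| / (2 * (|e| + 1))) * (|e| + 1) := by
            apply mul_le_mul hμ.2 (by linarith [abs_nonneg e]) (abs_nonneg e) (by positivity)
        _ = |c| / 2 := by field_simp
    obtain ⟨hk1, hk2⟩ := abs_le.mp hkey
    constructor
    · intro hjS
      have hcpos : 0 < c := by
        have := sub_nonneg.mpr ((hmem j).mp hjS)
        rw [← hc] at this
        exact lt_of_le_of_ne this (Ne.symm hcne)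
      have habs : |c| = c := abs_of_pos hcpos
      rw [habs] at hk1
      linarith [hdiff]
    · intro hjS
      have hcneg : c < 0 := by
        have h1 := (hmem j).not.mp hjS
        push_neg at h1
        rw [hc]; linarith
      have habs : |c| = -c := abs_of_neg hcneg
      rw [habs] at hk2
      linarith [hdiff]
  choose ε hεpos hεprop using hbr
  -- S nonempty, hence Fin N nonempty
  have hSne : S.Nonempty := design_nonempty x S hpd1
  have hNe : Nonempty (Fin N) := ⟨hSne.choose⟩
  set μ₀ := Finset.univ.inf' Finset.univ_nonempty ε with hμ₀
  have hμ₀pos : 0 < μ₀ := by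
    rw [hμ₀, Finset.lt_inf'_iff]
    exact fun j _ => hεpos j
  have hμ₀le : ∀ j, μ₀ ≤ ε j := fun j => Finset.inf'_le _ (Finset.mem_univ j)
  -- abbreviations
  set R : ℝ := ∑ j ∈ S, (y j - aug (x j) ⬝ᵥ θOLS.1) ^ 2
      + ∑ j ∈ Sᶜ, (y j - aug (x j) ⬝ᵥ θOLS.2) ^ 2 with hR
  set K : ℝ := ∑ j ∈ S, (aug (x j) ⬝ᵥ p.1) ^ 2
      + ∑ j ∈ Sᶜ, (aug (x j) ⬝ᵥ p.2) ^ 2 with hK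
  -- the quadratic formula on [0, μ₀]
  have key : ∀ μ ∈ Set.Icc (0:ℝ) μ₀,
      hingeV x y (θ + μ • p) = (1/2) * (R + (1-μ)^2 * K) := by
    intro μ hμ
    have hμj : ∀ j, μ ∈ Set.Icc (0:ℝ) (ε j) := fun j => ⟨hμ.1, le_trans hμ.2 (hμ₀le j)⟩
    have h1 : ∀ j ∈ S, (y j - max (aug (x j) ⬝ᵥ (θ + μ • p).1) (aug (x j) ⬝ᵥ (θ + μ • p).2)) ^ 2
        = (y j - aug (x j) ⬝ᵥ θOLS.1) ^ 2
          + (2*(1-μ)) * ((y j - aug (x j) ⬝ᵥ θOLS.1) * (aug (x j) ⬝ᵥ p.1))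
          + (1-μ)^2 * (aug (x j) ⬝ᵥ p.1) ^ 2 := by
      intro j hj
      have hmax : max (aug (x j) ⬝ᵥ (θ.1 + μ • p.1)) (aug (x j) ⬝ᵥ (θ.2 + μ • p.2))
          = aug (x j) ⬝ᵥ (θ.1 + μ • p.1) := max_eq_left (((hεprop j) μ (hμj j)).1 hj)
      have hfst : (θ + μ • p).1 = θ.1 + μ • p.1 := rfl
      have hsnd : (θ + μ • p).2 = θ.2 + μ • p.2 := rfl
      rw [hfst, hsnd, hmax]
      have hols : aug (x j) ⬝ᵥ θOLS.1 = aug (x j) ⬝ᵥ θ.1 + aug (x j) ⬝ᵥ p.1 := by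
        rw [hp]; simp [dotProduct_sub]
      rw [dotProduct_add, dotProduct_smul, smul_eq_mul, hols]
      ring
    have h2 : ∀ j ∈ Sᶜ, (y j - max (aug (x j) ⬝ᵥ (θ + μ • p).1) (aug (x j) ⬝ᵥ (θ + μ • p).2)) ^ 2
        = (y j - aug (x j) ⬝ᵥ θOLS.2) ^ 2
          + (2*(1-μ)) * ((y j - aug (x j) ⬝ᵥ θOLS.2) * (aug (x j) ⬝ᵥ p.2))
          + (1-μ)^2 * (aug (x j) ⬝ᵥ p.2) ^ 2 := by
      intro j hj
      rw [Finset.mem_compl] at hj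
      have hmax : max (aug (x j) ⬝ᵥ (θ.1 + μ • p.1)) (aug (x j) ⬝ᵥ (θ.2 + μ • p.2))
          = aug (x j) ⬝ᵥ (θ.2 + μ • p.2) := max_eq_right (((hεprop j) μ (hμj j)).2 hj)
      have hfst : (θ + μ • p).1 = θ.1 + μ • p.1 := rfl
      have hsnd : (θ + μ • p).2 = θ.2 + μ • p.2 := rfl
      rw [hfst, hsnd, hmax]
      have hols : aug (x j) ⬝ᵥ θOLS.2 = aug (x j) ⬝ᵥ θ.2 + aug (x j) ⬝ᵥ p.2 := by
        rw [hp]; simp [dotProduct_sub]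
      rw [dotProduct_add, dotProduct_smul, smul_eq_mul, hols]
      ring
    have hcross1 : ∑ j ∈ S, (y j - aug (x j) ⬝ᵥ θOLS.1) * (aug (x j) ⬝ᵥ p.1) = 0 := by
      have := normal_sum x y S hpd1 p.1
      rw [hOLS]
      exact this
    have hcross2 : ∑ j ∈ Sᶜ, (y j - aug (x j) ⬝ᵥ θOLS.2) * (aug (x j) ⬝ᵥ p.2) = 0 := by
      have := normal_sum x y Sᶜ hpd2 p.2
      rw [hOLS]
      exact this
    unfold hingeV
    rw [← Finset.sum_add_sum_compl S]
    rw [Finset.sum_congr rfl h1, Finset.sum_congr rfl h2]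
    simp only [Finset.sum_add_distrib, ← Finset.mul_sum, hcross1, hcross2]
    rw [hR, hK]
    ring
  -- value at θ
  have hV0 : hingeV x y θ = (1/2) * (R + K) := by
    have h0 : θ + (0:ℝ) • p = θ := by simp
    have := key 0 ⟨le_refl _, le_of_lt hμ₀pos⟩
    rw [h0] at this
    rw [this]; ring
  -- K > 0
  have hpne : p ≠ 0 := by
    rw [hp, sub_ne_zero]
    exact fun h => hne h.symm
  have hKpos : 0 < K := by
    have hcase : p.1 ≠ 0 ∨ p.2 ≠ 0 := by
      by_contra h
      push_neg at h
      exact hpne (Prod.ext h.1 h.2)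
    have hn1 : 0 ≤ ∑ j ∈ S, (aug (x j) ⬝ᵥ p.1) ^ 2 :=
      Finset.sum_nonneg fun j _ => sq_nonneg _
    have hn2 : 0 ≤ ∑ j ∈ Sᶜ, (aug (x j) ⬝ᵥ p.2) ^ 2 :=
      Finset.sum_nonneg fun j _ => sq_nonneg _
    rcases hcase with h | h
    · have := quad_pos x S hpd1 p.1 h
      rw [hK]; linarith
    · have := quad_pos x Sᶜ hpd2 p.2 h
      rw [hK]; linarith
  -- conclude
  refine ⟨min μ₀ 1, lt_min hμ₀pos one_pos, ?_⟩
  intro μ hμ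
  obtain ⟨hμpos, hμle⟩ := hμ
  have hμ1 : μ ≤ 1 := le_trans hμle (min_le_right _ _)
  have hμ0 : μ ≤ μ₀ := le_trans hμle (min_le_left _ _)
  rw [key μ ⟨le_of_lt hμpos, hμ0⟩, hV0]
  nlinarith [mul_pos (mul_pos hμpos (by linarith : (0:ℝ) < 2 - μ)) hKpos]
end
end

section
/- Let R ⊂ ℝᵈ be a convex set of diameter at most δ, and let g be twice continuously differentiable on an open set containing R with Hessian operator norm bounded by M on R. Fix a center c ∈ R and let w* ∈ ℝ^{d+1} be the coefficient vector of the Taylor linear function, i.e., w*ᵀ(x, 1) = g(c) + ∇g(c)ᵀ(x − c) for all x. Let x₁,…,x_N ∈ R be training points with augmented design matrix X (rows (xⱼ, 1)ᵀ) satisfying λ_min(XᵀX) ≥ cN for some constant c > 0, responses yⱼ = g(xⱼ), and OLS estimate ŵ = (XᵀX)⁻¹Xᵀy. Assume ‖(x, 1)‖₂ ≤ D for all x ∈ R. Then for every x ∈ R, |g(x) − ŵᵀ(x, 1)| ≤ (M/2)(1 + D/√c)·δ². -/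
open Matrix

noncomputable section

/-- Augmented vector `(x, 1) ∈ ℝ^{d+1}` of a point `x ∈ ℝᵈ`. -/
def augE {d : ℕ} (v : EuclideanSpace ℝ (Fin d)) : Fin (d + 1) → ℝ :=
  Fin.snoc (fun i => v i) 1

/-- The Gram matrix `XᵀX` of a real matrix is Hermitian (symmetric). -/
lemma gramIsHermitian {m n : ℕ} (X : Matrix (Fin m) (Fin n) ℝ) :
    (Xᵀ * X).IsHermitian := by
  rw [← Matrix.conjTranspose_eq_transpose_of_trivial]
  exact Matrix.isHermitian_conjTranspose_mul_self X

lemma dot_self_nonneg' {n : ℕ} (z : Fin n → ℝ) : 0 ≤ z ⬝ᵥ z :=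
  Finset.sum_nonneg fun i _ => mul_self_nonneg (z i)

/-- Second-order Taylor bound on a convex set. -/
lemma taylor_aux {d : ℕ} {Rset U : Set (EuclideanSpace ℝ (Fin d))}
    (hconv : Convex ℝ Rset) (hU : IsOpen U) (hRU : Rset ⊆ U)
    {g : EuclideanSpace ℝ (Fin d) → ℝ} (hg : ContDiffOn ℝ 2 g U)
    {M : ℝ} (hM : ∀ z ∈ Rset, ‖fderiv ℝ (fderiv ℝ g) z‖ ≤ M)
    {ctr v : EuclideanSpace ℝ (Fin d)} (hctr : ctr ∈ Rset) (hv : v ∈ Rset) :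
    |g v - (g ctr + fderiv ℝ g ctr (v - ctr))| ≤ M / 2 * ‖v - ctr‖ ^ 2 := by
  set u := v - ctr with hu
  have hgdiff : ∀ z ∈ U, DifferentiableAt ℝ g z := fun z hz =>
    (hg.differentiableOn (by norm_num)).differentiableAt (hU.mem_nhds hz)
  have hg1 : ContDiffOn ℝ 1 (fderiv ℝ g) U := hg.fderiv_of_isOpen hU (by norm_num)
  have hg'diff : ∀ z ∈ U, DifferentiableAt ℝ (fderiv ℝ g) z := fun z hz =>
    (hg1.differentiableOn (by norm_num)).differentiableAt (hU.mem_nhds hz)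
  have hLip : ∀ z ∈ Rset, ‖fderiv ℝ g z - fderiv ℝ g ctr‖ ≤ M * ‖z - ctr‖ :=
    fun z hz => Convex.norm_image_sub_le_of_norm_fderiv_le
      (fun w hw => hg'diff w (hRU hw)) hM hconv hctr hz
  set L : ℝ → EuclideanSpace ℝ (Fin d) := fun t => ctr + t • u with hL
  have hLmem : ∀ t ∈ Set.Icc (0:ℝ) 1, L t ∈ Rset := fun t ht => by
    simpa [hL] using hconv.add_smul_sub_mem hctr hv ht
  set A : ℝ := fderiv ℝ g ctr u with hA
  set φ : ℝ → ℝ := fun t => g (L t) - t * A with hφ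
  set ψ : ℝ → ℝ := fun t => fderiv ℝ g (L t) u - A with hψ
  have huIcc : Set.uIcc (0:ℝ) 1 = Set.Icc 0 1 := Set.uIcc_of_le zero_le_one
  have hM0 : 0 ≤ M := le_trans (norm_nonneg (fderiv ℝ (fderiv ℝ g) ctr)) (hM ctr hctr)
  have hderiv : ∀ t ∈ Set.uIcc (0:ℝ) 1, HasDerivAt φ (ψ t) t := by
    intro t ht
    rw [huIcc] at ht
    have hLd : HasDerivAt L u t := by
      simpa [hL] using ((hasDerivAt_id t).smul_const u).const_add ctr
    have h1 : HasDerivAt (fun s => g (L s)) (fderiv ℝ g (L t) u) t :=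
      (hgdiff (L t) (hRU (hLmem t ht))).hasFDerivAt.comp_hasDerivAt t hLd
    exact h1.sub (hasDerivAt_mul_const A)
  have hcont : ContinuousOn ψ (Set.uIcc (0:ℝ) 1) := by
    rw [huIcc]
    have hLc : ContinuousOn L (Set.Icc (0:ℝ) 1) :=
      Continuous.continuousOn (by fun_prop)
    have hmaps : Set.MapsTo L (Set.Icc (0:ℝ) 1) U := fun t ht => hRU (hLmem t ht)
    have h1 : ContinuousOn (fun t => fderiv ℝ g (L t)) (Set.Icc (0:ℝ) 1) :=
      (hg.continuousOn_fderiv_of_isOpen hU (by norm_num)).comp hLc hmaps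
    exact (h1.clm_apply continuousOn_const).sub continuousOn_const
  have hFTC : ∫ t in (0:ℝ)..1, ψ t = φ 1 - φ 0 :=
    intervalIntegral.integral_eq_sub_of_hasDerivAt hderiv hcont.intervalIntegrable
  have hbd : ‖∫ t in (0:ℝ)..1, ψ t‖ ≤ |∫ t in (0:ℝ)..1, M * ‖u‖ ^ 2 * t| := by
    apply intervalIntegral.norm_integral_le_abs_of_norm_le
    · rw [Set.uIoc_of_le zero_le_one]
      refine (MeasureTheory.ae_restrict_iff' measurableSet_Ioc).mpr (.of_forall ?_)
      intro t ht
      have hmem : L t ∈ Rset := hLmem t ⟨le_of_lt ht.1, ht.2⟩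
      have h2 := hLip (L t) hmem
      have h3 : ‖L t - ctr‖ = t * ‖u‖ := by
        simp [hL, norm_smul, abs_of_pos ht.1]
      calc ‖ψ t‖ = ‖(fderiv ℝ g (L t) - fderiv ℝ g ctr) u‖ := by simp [hψ, hA]
        _ ≤ ‖fderiv ℝ g (L t) - fderiv ℝ g ctr‖ * ‖u‖ :=
            (fderiv ℝ g (L t) - fderiv ℝ g ctr).le_opNorm u
        _ ≤ (M * (t * ‖u‖)) * ‖u‖ := by
            refine mul_le_mul_of_nonneg_right ?_ (norm_nonneg u)
            rw [← h3]; exact h2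
        _ = M * ‖u‖ ^ 2 * t := by ring
    · exact (Continuous.intervalIntegrable (by fun_prop) 0 1)
  have hval : ∫ t in (0:ℝ)..1, M * ‖u‖ ^ 2 * t = M * ‖u‖ ^ 2 / 2 := by
    rw [intervalIntegral.integral_const_mul, integral_id]
    ring
  have hL1 : L 1 = v := by simp [hL, hu]
  have hL0 : L 0 = ctr := by simp [hL]
  have hmain : |φ 1 - φ 0| ≤ M * ‖u‖ ^ 2 / 2 := by
    rw [← hFTC]
    calc |∫ t in (0:ℝ)..1, ψ t| ≤ |∫ t in (0:ℝ)..1, M * ‖u‖ ^ 2 * t| := hbd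
      _ = M * ‖u‖ ^ 2 / 2 := by rw [hval, abs_of_nonneg (by positivity)]
  have hφ1 : φ 1 = g v - A := by simp [hφ, hL1]
  have hφ0 : φ 0 = g ctr := by simp [hφ, hL0]
  rw [hφ1, hφ0] at hmain
  calc |g v - (g ctr + fderiv ℝ g ctr (v - ctr))| = |g v - A - g ctr| := by
        rw [hA, hu]; ring_nf
    _ ≤ M * ‖u‖ ^ 2 / 2 := hmain
    _ = M / 2 * ‖v - ctr‖ ^ 2 := by rw [← hu]; ring

/-- Rayleigh-type lower bound for the quadratic form of a Hermitian matrix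
in terms of a lower bound on its eigenvalues. -/
lemma rayleigh_aux {n : ℕ} {A : Matrix (Fin n) (Fin n) ℝ} (hA : A.IsHermitian)
    {c : ℝ} (hmin : ∀ i, c ≤ hA.eigenvalues i) (z : Fin n → ℝ) :
    c * (z ⬝ᵥ z) ≤ z ⬝ᵥ (A *ᵥ z) := by
  set Uu : Matrix (Fin n) (Fin n) ℝ := (hA.eigenvectorUnitary : Matrix (Fin n) (Fin n) ℝ)
  have hUU : Uu * star Uu = 1 := (Matrix.mem_unitaryGroup_iff).mp hA.eigenvectorUnitary.2
  have hdiag : Matrix.diagonal (RCLike.ofReal ∘ hA.eigenvalues)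
      - c • (1 : Matrix (Fin n) (Fin n) ℝ)
      = Matrix.diagonal (fun i => hA.eigenvalues i - c) := by
    rw [RCLike.ofReal_real_eq_id]
    ext i j
    by_cases h : i = j <;> simp [h, Matrix.one_apply, Matrix.diagonal_apply]
  have key : A - c • (1 : Matrix (Fin n) (Fin n) ℝ)
      = Uu * Matrix.diagonal (fun i => hA.eigenvalues i - c) * Uuᴴ := by
    rw [← hdiag, Matrix.mul_sub, Matrix.sub_mul]
    rw [← Matrix.star_eq_conjTranspose]
    conv_lhs => rw [hA.spectral_theorem, Unitary.conjStarAlgAut_apply]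
    congr 1
    rw [Matrix.mul_smul, Matrix.smul_mul, Matrix.mul_one, hUU]
  have hpsd : (A - c • (1 : Matrix (Fin n) (Fin n) ℝ)).PosSemidef := by
    rw [key]
    exact (Matrix.posSemidef_diagonal_iff.mpr
      fun i => sub_nonneg.2 (hmin i)).mul_mul_conjTranspose_same Uu
  have h := hpsd.dotProduct_mulVec_nonneg z
  simp only [Matrix.sub_mulVec, Matrix.smul_mulVec, Matrix.one_mulVec, star_trivial,
    dotProduct_sub, dotProduct_smul, smul_eq_mul] at h
  linarith

/-- Per-region error bound: on a convex region `R` of diameter at most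
`δ`, for `g` twice continuously differentiable with Hessian norm bounded by `M` on `R`,
with Taylor coefficients `w*` around a center `c ∈ R`, training points in `R` whose
augmented design matrix satisfies `λ_min(XᵀX) ≥ c₀N`, responses `yⱼ = g(xⱼ)`, OLS estimate
`ŵ`, and `‖(x,1)‖₂ ≤ D` on `R`, we have for every `x ∈ R`:
`|g(x) − ŵᵀ(x,1)| ≤ (M/2)(1 + D/√c₀)·δ²`. -/
theorem stmt_13 {d N : ℕ} (Rset : Set (EuclideanSpace ℝ (Fin d)))
    (hconv : Convex ℝ Rset)
    (δ : ℝ) (hδ : 0 < δ) (hdiam : Metric.diam Rset ≤ δ)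
    (g : EuclideanSpace ℝ (Fin d) → ℝ)
    (U : Set (EuclideanSpace ℝ (Fin d))) (hU : IsOpen U) (hRU : Rset ⊆ U)
    (hg : ContDiffOn ℝ 2 g U)
    (M : ℝ) (hM : ∀ z ∈ Rset, ‖fderiv ℝ (fderiv ℝ g) z‖ ≤ M)
    (ctr : EuclideanSpace ℝ (Fin d)) (hctr : ctr ∈ Rset)
    (wstar : Fin (d + 1) → ℝ)
    (hw : ∀ v : EuclideanSpace ℝ (Fin d),
      wstar ⬝ᵥ augE v = g ctr + fderiv ℝ g ctr (v - ctr))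
    (x : Fin N → EuclideanSpace ℝ (Fin d)) (hx : ∀ j, x j ∈ Rset)
    (X : Matrix (Fin N) (Fin (d + 1)) ℝ) (hX : ∀ j, X j = augE (x j))
    (c₀ : ℝ) (hc₀ : 0 < c₀) (hN : 1 ≤ N)
    (hmin : ∀ i, c₀ * N ≤ (gramIsHermitian X).eigenvalues i)
    (y : Fin N → ℝ) (hy : ∀ j, y j = g (x j))
    (what : Fin (d + 1) → ℝ) (hwhat : what = (Xᵀ * X)⁻¹.mulVec (Xᵀ.mulVec y))
    (D : ℝ) (hD : ∀ v ∈ Rset, Real.sqrt (augE v ⬝ᵥ augE v) ≤ D) :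
    ∀ v ∈ Rset, |g v - what ⬝ᵥ augE v| ≤ M / 2 * (1 + D / Real.sqrt c₀) * δ ^ 2 := by
  intro v hv
  classical
  have hM0 : 0 ≤ M := le_trans (norm_nonneg (fderiv ℝ (fderiv ℝ g) ctr)) (hM ctr hctr)
  set T : ℝ := M / 2 * δ ^ 2 with hT
  have hT0 : 0 ≤ T := by positivity
  -- norms of points are bounded by D
  have haug : ∀ w : EuclideanSpace ℝ (Fin d), augE w ⬝ᵥ augE w = (∑ i, w i * w i) + 1 := by
    intro w
    simp [dotProduct, augE, Fin.sum_univ_castSucc]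
  have hnorm_le : ∀ w ∈ Rset, ‖w‖ ≤ D := by
    intro w hw'
    have h1 : ‖w‖ = Real.sqrt (∑ i, w i * w i) := by
      rw [EuclideanSpace.norm_eq]
      congr 1
      refine Finset.sum_congr rfl fun i _ => ?_
      rw [Real.norm_eq_abs, sq_abs, sq]
    rw [h1]
    refine le_trans (Real.sqrt_le_sqrt ?_) (hD w hw')
    rw [haug w]; linarith
  have hD0 : (0:ℝ) ≤ D := le_trans (Real.sqrt_nonneg _) (hD ctr hctr)
  have hbdd : Bornology.IsBounded Rset := isBounded_iff_forall_norm_le.2 ⟨D, hnorm_le⟩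
  have hdist : ∀ w ∈ Rset, ‖w - ctr‖ ≤ δ := fun w hw' => by
    rw [← dist_eq_norm]
    exact le_trans (Metric.dist_le_diam_of_mem hbdd hw' hctr) hdiam
  -- Step 1: Taylor approximation bound
  have step1 : ∀ w ∈ Rset, |g w - wstar ⬝ᵥ augE w| ≤ T := by
    intro w hw'
    rw [hw w]
    refine le_trans (taylor_aux hconv hU hRU hg hM hctr hw') ?_
    rw [hT]
    have : ‖w - ctr‖ ^ 2 ≤ δ ^ 2 :=
      pow_le_pow_left₀ (norm_nonneg _) (hdist w hw') 2
    nlinarith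
  -- Matrix setup
  set A := Xᵀ * X with hAdef
  have hAh := gramIsHermitian X
  have hNpos : (0:ℝ) < N := by
    have : (1:ℝ) ≤ N := by exact_mod_cast hN
    linarith
  have heig : ∀ i, (0:ℝ) < hAh.eigenvalues i := fun i =>
    lt_of_lt_of_le (by positivity : (0:ℝ) < c₀ * N) (hmin i)
  have hdet : IsUnit A.det := by
    rw [hAh.det_eq_prod_eigenvalues]
    refine isUnit_iff_ne_zero.2 (ne_of_gt (Finset.prod_pos fun i _ => ?_))
    exact_mod_cast heig i
  set r : Fin N → ℝ := y - X *ᵥ wstar with hr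
  set z : Fin (d + 1) → ℝ := what - wstar with hzdef
  have hAz : A *ᵥ z = Xᵀ *ᵥ r := by
    rw [hzdef, Matrix.mulVec_sub, hwhat]
    rw [Matrix.mulVec_mulVec, Matrix.mul_nonsing_inv _ hdet, Matrix.one_mulVec]
    rw [hr, Matrix.mulVec_sub, ← Matrix.mulVec_mulVec]
  set s : ℝ := z ⬝ᵥ (A *ᵥ z) with hs
  have hs1 : s = (X *ᵥ z) ⬝ᵥ (X *ᵥ z) := by
    rw [hs, hAdef, ← Matrix.mulVec_mulVec, Matrix.dotProduct_mulVec, Matrix.vecMul_transpose]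
  have hs2 : s = (X *ᵥ z) ⬝ᵥ r := by
    rw [hs, hAz, Matrix.dotProduct_mulVec, Matrix.vecMul_transpose]
  have hs0 : 0 ≤ s := hs1 ▸ dot_self_nonneg' _
  have hrr0 : 0 ≤ r ⬝ᵥ r := dot_self_nonneg' _
  have hcs : s ^ 2 ≤ s * (r ⬝ᵥ r) := by
    have h := Finset.sum_mul_sq_le_sq_mul_sq Finset.univ (X *ᵥ z) r
    have h2 : ((X *ᵥ z) ⬝ᵥ r) ^ 2 ≤ ((X *ᵥ z) ⬝ᵥ (X *ᵥ z)) * (r ⬝ᵥ r) := by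
      simpa [dotProduct, sq] using h
    calc s ^ 2 = ((X *ᵥ z) ⬝ᵥ r) ^ 2 := by rw [hs2]
      _ ≤ ((X *ᵥ z) ⬝ᵥ (X *ᵥ z)) * (r ⬝ᵥ r) := h2
      _ = s * (r ⬝ᵥ r) := by rw [← hs1]
  have hsrr : s ≤ r ⬝ᵥ r := by
    rcases eq_or_lt_of_le hs0 with h | h
    · rw [← h]; exact hrr0
    · have h2 := hcs; rw [sq] at h2
      exact le_of_mul_le_mul_left h2 h
  have hray : c₀ * N * (z ⬝ᵥ z) ≤ s := rayleigh_aux hAh hmin z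
  -- residual bound
  have hres : ∀ j, |r j| ≤ T := by
    intro j
    have h1 : r j = g (x j) - wstar ⬝ᵥ augE (x j) := by
      simp only [hr, Pi.sub_apply, hy j, Matrix.mulVec, hX j]
      rw [dotProduct_comm]
    rw [h1]; exact step1 _ (hx j)
  have hrrN : r ⬝ᵥ r ≤ N * T ^ 2 := by
    have hj : ∀ j, r j * r j ≤ T ^ 2 := fun j => by
      have h := hres j
      calc r j * r j = |r j| * |r j| := (abs_mul_abs_self _).symm
        _ ≤ T * T := mul_le_mul h h (abs_nonneg _) hT0
        _ = T ^ 2 := (sq T).symm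
    calc r ⬝ᵥ r = ∑ j, r j * r j := rfl
      _ ≤ ∑ _j : Fin N, T ^ 2 := Finset.sum_le_sum fun j _ => hj j
      _ = N * T ^ 2 := by simp [Finset.sum_const, mul_comm]
  have hzz : z ⬝ᵥ z ≤ T ^ 2 / c₀ := by
    have h1 : c₀ * ↑N * (z ⬝ᵥ z) ≤ ↑N * T ^ 2 := le_trans hray (le_trans hsrr hrrN)
    have h2 : c₀ * (z ⬝ᵥ z) ≤ T ^ 2 := by nlinarith
    rw [le_div_iff₀ hc₀]; nlinarith
  -- Cauchy-Schwarz for the evaluation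
  have hcs2 : |z ⬝ᵥ augE v| ≤ Real.sqrt (z ⬝ᵥ z) * Real.sqrt (augE v ⬝ᵥ augE v) := by
    have h := Finset.sum_mul_sq_le_sq_mul_sq Finset.univ z (augE v)
    have h2 : (z ⬝ᵥ augE v) ^ 2 ≤ (z ⬝ᵥ z) * (augE v ⬝ᵥ augE v) := by
      simpa [dotProduct, sq] using h
    calc |z ⬝ᵥ augE v| ≤ Real.sqrt ((z ⬝ᵥ z) * (augE v ⬝ᵥ augE v)) := Real.abs_le_sqrt h2
      _ = Real.sqrt (z ⬝ᵥ z) * Real.sqrt (augE v ⬝ᵥ augE v) :=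
        Real.sqrt_mul (dot_self_nonneg' z) _
  have hzn : Real.sqrt (z ⬝ᵥ z) ≤ T / Real.sqrt c₀ := by
    have h := Real.sqrt_le_sqrt hzz
    rwa [Real.sqrt_div (sq_nonneg T), Real.sqrt_sq hT0] at h
  have han : Real.sqrt (augE v ⬝ᵥ augE v) ≤ D := hD v hv
  have hzan : |z ⬝ᵥ augE v| ≤ T / Real.sqrt c₀ * D :=
    le_trans hcs2 (mul_le_mul hzn han (Real.sqrt_nonneg _)
      (div_nonneg hT0 (Real.sqrt_nonneg _)))
  -- final combination
  have hsq : (0:ℝ) < Real.sqrt c₀ := Real.sqrt_pos.2 hc₀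
  calc |g v - what ⬝ᵥ augE v| = |(g v - wstar ⬝ᵥ augE v) - z ⬝ᵥ augE v| := by
        rw [hzdef, sub_dotProduct]; ring_nf
    _ ≤ |g v - wstar ⬝ᵥ augE v| + |z ⬝ᵥ augE v| := abs_sub _ _
    _ ≤ T + T / Real.sqrt c₀ * D := add_le_add (step1 v hv) hzan
    _ = M / 2 * (1 + D / Real.sqrt c₀) * δ ^ 2 := by
        rw [hT]; field_simp
end
end
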